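/- If for every natural number m, whenever D₁ ↦^{*_{Υ₁;Θ₁}} D₁' there exist Υ₂ ⊇ Υ₁ and D₂' with D₂ ↦^{*_{Υ₂}} D₂' such that all focused value-relation conditions hold at index m+1, and the second-run configurations admit minimal sending configurations (for every target set a minimal intermediate configuration through which all larger sends factor) and the value relation is backward-closed on the second run, then the existential over D₂' can be pulled outside the universal quantifier over m: whenever D₁ ↦^{*_{Υ₁;Θ₁}} D₁' there exist Υ₂ ⊇ Υ₁ and D₂' with D₂ ↦^{*_{Υ₂}} D₂' such that for ALL k the focused value-relation conditions hold at index k+1. -/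
import Mathlib


/-- Quantifier-exchange lemma (moving an existential over a universal):
in an abstract transition system with annotated reachability, a family of
focused value relations that is backward-closed on the second run, and
minimal sending configurations on the second run, if for every index `m` the
mutual simulation property holds at index `m+1`, then a single second-run
configuration can be chosen that works for all indices simultaneously. -/
theorem stmt12 {Conf Chan : Type*}
    (Star : Conf → Conf → Prop)
    (ReachIO : Conf → Set Chan → Set Chan → Conf → Prop)
    (ReachS : Conf → Set Chan → Conf → Prop)
    (Vout Vin : ℕ → Chan → Conf → Conf → Prop)
    (Sends : Conf → Chan → Prop)
    (OutCh InCh : Set Chan)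
    (D1 D2 : Conf)
    -- annotated reachability yields plain reachability and readiness to send
    (hstar : ∀ D Υ D', ReachS D Υ D' → Star D D')
    (hready : ∀ D Υ D', ReachS D Υ D' → ∀ y ∈ Υ, Sends D' y)
    -- backward closure of the value relations on the second run
    (hVoutBack : ∀ m y A B B'', Vout m y A B → Star B'' B → Sends B'' y →
      Vout m y A B'')
    (hVinBack : ∀ m y A B B'', Vin m y A B → Star B'' B → Vin m y A B'')
    -- minimal sending configurations: every send-annotated run of `D2`
    -- covering `Υ₁` factors through a minimal one
    (hmin : ∀ (Υ₁ Υ₂ : Set Chan) (D' : Conf), ReachS D2 Υ₂ D' → Υ₁ ⊆ Υ₂ →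
      ∃ Υ D'', Υ₁ ⊆ Υ ∧ Υ ⊆ Υ₂ ∧ ReachS D2 Υ D'' ∧
        ∀ (Υ₃ : Set Chan) (D₃ : Conf), Υ₁ ⊆ Υ₃ → ReachS D2 Υ₃ D₃ →
          ReachS D'' Υ₃ D₃)
    -- main hypothesis: for every `m`, `D2` can simulate each annotated run of
    -- `D1` with the focused value conditions at index `m+1`
    (hmain : ∀ m : ℕ, ∀ (Υ₁ Θ₁ : Set Chan) (D1' : Conf),
      ReachIO D1 Υ₁ Θ₁ D1' →
      ∃ Υ₂ D2', ReachS D2 Υ₂ D2' ∧ Υ₁ ⊆ Υ₂ ∧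
        (∀ y ∈ OutCh, y ∈ Υ₁ → Vout (m + 1) y D1' D2') ∧
        (∀ y ∈ InCh, y ∈ Θ₁ → Vin (m + 1) y D1' D2')) :
    -- conclusion: the existential over `Υ₂, D2'` commutes over `∀ k`
    ∀ (Υ₁ Θ₁ : Set Chan) (D1' : Conf), ReachIO D1 Υ₁ Θ₁ D1' →
      ∃ Υ₂ D2', ReachS D2 Υ₂ D2' ∧ Υ₁ ⊆ Υ₂ ∧
        (∀ y ∈ OutCh, y ∈ Υ₁ → ∀ k : ℕ, Vout (k + 1) y D1' D2') ∧
        (∀ y ∈ InCh, y ∈ Θ₁ → ∀ k : ℕ, Vin (k + 1) y D1' D2') := by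
  intro Υ₁ Θ₁ D1' h1
  obtain ⟨Υ₂, D2', hR, hsub, _, _⟩ := hmain 0 Υ₁ Θ₁ D1' h1
  obtain ⟨Υ, D'', hΥ1, hΥ2, hR'', hfac⟩ := hmin Υ₁ Υ₂ D2' hR hsub
  refine ⟨Υ, D'', hR'', hΥ1, ?_, ?_⟩
  · intro y hy hyΥ k
    obtain ⟨Υk, Dk, hRk, hsubk, hVo, _⟩ := hmain k Υ₁ Θ₁ D1' h1
    exact hVoutBack _ y D1' Dk D'' (hVo y hy hyΥ) (hstar _ _ _ (hfac Υk Dk hsubk hRk))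
      (hready D2 Υ D'' hR'' y (hΥ1 hyΥ))
  · intro y hy hyΘ k
    obtain ⟨Υk, Dk, hRk, hsubk, _, hVi⟩ := hmain k Υ₁ Θ₁ D1' h1
    exact hVinBack _ y D1' Dk D'' (hVi y hy hyΘ) (hstar _ _ _ (hfac Υk Dk hsubk hRk))
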